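/- arXiv:0708.3338 — 6 statements merged into one kernel-verified Lean document; each statement's English description precedes it below -/
import Mathlib

section
/- Let S be a countable set and let P be a stochastic matrix on S (i.e. P_{ij} ≥ 0 for all i,j ∈ S and Σ_j P_{ij} = 1 for every i). If there exists a state j ∈ S such that for every i ∈ S one has Σ_{n ≥ 1} (P^n)_{ij} > 0 (i.e. j is reachable from every state with positive probability), then P admits at most one invariant probability measure. -/
open scoped ENNReal

/-- `n`-th power of a (sub)stochastic matrix with entries in `ℝ≥0∞` over a countable
index set: `matPow P 0` is the identity and
`matPow P (n+1) i j = ∑' k, matPow P n i k * P k j`. -/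
noncomputable def matPow {S : Type*} (P : S → S → ℝ≥0∞) : ℕ → S → S → ℝ≥0∞
  | 0 => fun i j => by classical exact if i = j then 1 else 0
  | n + 1 => fun i j => ∑' k, matPow P n i k * P k j

/-- General-index version of `ENNReal.tsum_sub`. -/
lemma my_tsum_sub {ι : Type*} (f g : ι → ℝ≥0∞) (hle : ∀ i, g i ≤ f i)
    (hg : ∑' i, g i ≠ ∞) :
    ∑' i, (f i - g i) = ∑' i, f i - ∑' i, g i := by
  have h : ∑' i, (f i - g i) + ∑' i, g i = ∑' i, f i := by
    rw [← ENNReal.tsum_add]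
    exact tsum_congr fun i => tsub_add_cancel_of_le (hle i)
  rw [← h, ENNReal.add_sub_cancel_right hg]

/-- If `f ≤ g` pointwise, the total mass of `g` is at most that of `f`, and the mass of `f`
is finite, then `f = g`. -/
lemma my_eq_of_le {ι : Type*} (f g : ι → ℝ≥0∞) (hle : ∀ i, f i ≤ g i)
    (hsum : ∑' i, g i ≤ ∑' i, f i) (hf : ∑' i, f i ≠ ∞) : ∀ i, f i = g i := by
  have h0 : ∑' i, (g i - f i) = 0 := by
    rw [my_tsum_sub g f hle hf]
    exact tsub_eq_zero_of_le hsum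
  intro i
  exact le_antisymm (hle i) (tsub_eq_zero_iff_le.mp (ENNReal.tsum_eq_zero.mp h0 i))

/-- An invariant (finite) measure is invariant for all matrix powers. -/
lemma my_matPow_invariant {S : Type*} (P : S → S → ℝ≥0∞)
    (hrow : ∀ i, ∑' j, P i j = 1)
    (d : S → ℝ≥0∞) (hd : ∀ k, ∑' i, d i * P i k = d k) :
    ∀ n k, ∑' i, d i * matPow P n i k = d k := by
  intro n
  induction n with
  | zero =>
    intro k
    classical
    have : ∀ i, d i * matPow P 0 i k = if i = k then d i else 0 := by
      intro i
      simp only [matPow]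
      split <;> simp
    rw [tsum_congr this, tsum_eq_single k (by intro b hb; simp [hb]), if_pos rfl]
  | succ n ih =>
    intro k
    have : ∀ i, d i * matPow P (n + 1) i k = ∑' l, d i * (matPow P n i l * P l k) := by
      intro i
      simp only [matPow]
      rw [ENNReal.tsum_mul_left]
    rw [tsum_congr this, ENNReal.tsum_comm]
    have : ∀ l, ∑' i, d i * (matPow P n i l * P l k)
        = (∑' i, d i * matPow P n i l) * P l k := by
      intro l
      calc ∑' i, d i * (matPow P n i l * P l k)
          = ∑' i, (d i * matPow P n i l) * P l k :=
            tsum_congr fun i => (mul_assoc _ _ _).symm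
        _ = (∑' i, d i * matPow P n i l) * P l k := ENNReal.tsum_mul_right
    rw [tsum_congr this]
    calc ∑' l, (∑' i, d i * matPow P n i l) * P l k
        = ∑' l, d l * P l k := tsum_congr fun l => by rw [ih l]
      _ = d k := hd k

/-- Auxiliary one-sided version: under the hypotheses, if moreover `π j ≤ π' j` at the
reachable state `j`, then `π = π'`. -/
lemma my_aux {S : Type*} (P : S → S → ℝ≥0∞)
    (hrow : ∀ i, ∑' j, P i j = 1)
    (j : S) (hreach : ∀ i, 0 < ∑' n : ℕ, matPow P (n + 1) i j)
    (π π' : S → ℝ≥0∞)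
    (hπ : ∑' i, π i = 1) (hπinv : ∀ k, ∑' i, π i * P i k = π k)
    (hπ' : ∑' i, π' i = 1) (hπ'inv : ∀ k, ∑' i, π' i * P i k = π' k)
    (hj : π j ≤ π' j) : π = π' := by
  classical
  set m : S → ℝ≥0∞ := fun i => min (π i) (π' i) with hm
  have hmπ : ∀ i, m i ≤ π i := fun i => min_le_left _ _
  have hmπ' : ∀ i, m i ≤ π' i := fun i => min_le_right _ _
  have hπfin : ∑' i, π i ≠ ∞ := by rw [hπ]; exact ENNReal.one_ne_top
  have hmfin : ∑' i, m i ≠ ∞ :=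
    fun h => hπfin (top_le_iff.mp (h ▸ ENNReal.tsum_le_tsum hmπ))
  -- m is subinvariant
  have hsub : ∀ k, ∑' i, m i * P i k ≤ m k := by
    intro k
    refine le_min ?_ ?_
    · calc ∑' i, m i * P i k ≤ ∑' i, π i * P i k :=
            ENNReal.tsum_le_tsum fun i => mul_le_mul_left (hmπ i) _
        _ = π k := hπinv k
    · calc ∑' i, m i * P i k ≤ ∑' i, π' i * P i k :=
            ENNReal.tsum_le_tsum fun i => mul_le_mul_left (hmπ' i) _
        _ = π' k := hπ'inv k
  -- total mass is conserved, so m is invariant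
  have hmass : ∑' k, m k ≤ ∑' k, ∑' i, m i * P i k := by
    rw [ENNReal.tsum_comm]
    apply le_of_eq
    refine (tsum_congr fun i => ?_).symm
    rw [ENNReal.tsum_mul_left, hrow i, mul_one]
  have hminv : ∀ k, ∑' i, m i * P i k = m k := by
    have hfin : ∑' k, ∑' i, m i * P i k ≠ ∞ :=
      fun h => hmfin (top_le_iff.mp (h ▸ ENNReal.tsum_le_tsum hsub))
    exact my_eq_of_le _ _ hsub hmass hfin
  -- d = π - m is invariant
  set d : S → ℝ≥0∞ := fun i => π i - m i with hdd
  have hPfin : ∀ i k, P i k ≠ ∞ := by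
    intro i k h
    have := ENNReal.le_tsum (f := P i) k
    rw [hrow i, h] at this
    exact ENNReal.one_ne_top (top_le_iff.mp this)
  have hmPfin : ∀ k, ∑' i, m i * P i k ≠ ∞ := fun k => by
    rw [hminv k]
    intro h
    exact hmfin (top_le_iff.mp (h ▸ ENNReal.le_tsum k))
  have hdinv : ∀ k, ∑' i, d i * P i k = d k := by
    intro k
    have h1 : ∀ i, d i * P i k = π i * P i k - m i * P i k := by
      intro i
      exact ENNReal.sub_mul fun _ _ => hPfin i k
    rw [tsum_congr h1,
      my_tsum_sub _ _ (fun i => mul_le_mul_left (hmπ i) _) (hmPfin k),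
      hπinv k, hminv k]
  -- d j = 0 since π j ≤ π' j
  have hdj : d j = 0 := by
    simp only [hdd, hm]
    rw [min_eq_left hj]
    exact tsub_self _
  -- reachability forces d ≡ 0
  have hd0 : ∀ i, d i = 0 := by
    intro i
    have hterm : ∀ n : ℕ, d i * matPow P (n + 1) i j = 0 := by
      intro n
      have := my_matPow_invariant P hrow d hdinv (n + 1) j
      rw [hdj] at this
      exact ENNReal.tsum_eq_zero.mp this i
    have : d i * ∑' n : ℕ, matPow P (n + 1) i j = 0 := by
      rw [← ENNReal.tsum_mul_left]
      exact ENNReal.tsum_eq_zero.mpr hterm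
    rcases mul_eq_zero.mp this with h | h
    · exact h
    · exact absurd h (hreach i).ne'
  -- hence π ≤ π' pointwise, and equal masses give equality
  have hle : ∀ i, π i ≤ π' i := by
    intro i
    exact le_trans (tsub_eq_zero_iff_le.mp (hd0 i)) (hmπ' i)
  funext i
  exact my_eq_of_le π π' hle (by rw [hπ, hπ']) hπfin i

/-- Let `P` be a stochastic matrix on a countable set `S` (entries are nonnegative, encoded by
taking values in `ℝ≥0∞`, and each row sums to `1`). If there is a state `j` that is reachable
from every state `i` with positive probability (`∑_{n ≥ 1} (P^n)_{ij} > 0`), then `P` has at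
most one invariant probability measure: any two invariant probability vectors coincide. -/
theorem stochasticMatrix_unique_invariant_of_reachable
    {S : Type*} [Countable S] (P : S → S → ℝ≥0∞)
    (hrow : ∀ i, ∑' j, P i j = 1)
    (j : S) (hreach : ∀ i, 0 < ∑' n : ℕ, matPow P (n + 1) i j)
    (π π' : S → ℝ≥0∞)
    (hπ : ∑' i, π i = 1) (hπinv : ∀ k, ∑' i, π i * P i k = π k)
    (hπ' : ∑' i, π' i = 1) (hπ'inv : ∀ k, ∑' i, π' i * P i k = π' k) :
    π = π' := by
  rcases le_total (π j) (π' j) with h | h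
  · exact my_aux P hrow j hreach π π' hπ hπinv hπ' hπ'inv h
  · exact (my_aux P hrow j hreach π' π hπ' hπ'inv hπ hπinv h).symm
end

section
/- Let P be a strong Feller Markov kernel on a Polish space X. If μ and ν are two invariant probability measures for P that are mutually singular, then the topological supports of μ and ν are disjoint: supp μ ∩ supp ν = ∅. -/
open MeasureTheory ProbabilityTheory Filter
open scoped ENNReal

/-- A Markov kernel is *strong Feller* if it maps bounded measurable functions to
continuous functions. -/
def StrongFeller {X : Type*} [MeasurableSpace X] [TopologicalSpace X] (P : Kernel X X) : Prop :=
  ∀ f : X → ℝ, Measurable f → (∃ C, ∀ x, |f x| ≤ C) →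
    Continuous fun x => ∫ y, f y ∂(P x)

/-- The topological support of a measure: the set of points all of whose neighbourhoods
have positive measure (equivalently, the smallest closed set of full measure). -/
def msupport {X : Type*} [TopologicalSpace X] [MeasurableSpace X]
    (μ : Measure X) : Set X :=
  {x | ∀ U ∈ nhds x, 0 < μ U}

/-- A measure `μ` is invariant for the kernel `P` if `∫ P(x,·) μ(dx) = μ`. -/
def Invariant {X : Type*} [MeasurableSpace X] (P : Kernel X X) (μ : Measure X) : Prop :=
  μ.bind (fun x => P x) = μ

/-! A set `s` with `μ s = 0` and `ν sᶜ = 0` separates `μ` from `ν`. By invariance, `P(x, s)`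
vanishes for `μ`-a.e. `x` and equals `1` for `ν`-a.e. `x`. By the strong Feller property
`x ↦ P(x, s)` is continuous, so these identities hold on the whole supports, which therefore
cannot meet. -/

lemma Invariant.ae_kernel_apply_eq_zero {X : Type*} [MeasurableSpace X] {P : Kernel X X}
    {μ : Measure X} (hμ : Invariant P μ) {A : Set X} (hA : MeasurableSet A) (h : μ A = 0) :
    ∀ᵐ x ∂μ, P x A = 0 := by
  have hint : ∫⁻ x, P x A ∂μ = 0 := by
    rw [← Measure.bind_apply hA P.measurable.aemeasurable, hμ, h]
  exact (lintegral_eq_zero_iff (P.measurable_coe hA)).mp hint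

lemma eq_of_mem_msupport_of_ae_eq {X Y : Type*} [TopologicalSpace X] [MeasurableSpace X]
    [TopologicalSpace Y] [T1Space Y] {μ : Measure X} {g : X → Y} (hg : Continuous g) {c : Y}
    (h : ∀ᵐ x ∂μ, g x = c) {x : X} (hx : x ∈ msupport μ) : g x = c := by
  by_contra hne
  have hopen : IsOpen {y | g y ≠ c} := isOpen_compl_singleton.preimage hg
  exact (hx _ (hopen.mem_nhds hne)).ne' (ae_iff.mp h)

lemma StrongFeller.continuous_measureReal {X : Type*} [MeasurableSpace X] [TopologicalSpace X]
    {P : Kernel X X} (hP : StrongFeller P) {A : Set X} (hA : MeasurableSet A) :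
    Continuous fun x => (P x).real A := by
  have hbounded : ∃ C, ∀ x, |A.indicator (1 : X → ℝ) x| ≤ C :=
    ⟨1, fun x => by by_cases hx : x ∈ A <;> simp [hx]⟩
  convert hP _ (measurable_const.indicator hA) hbounded using 2 with x
  exact (integral_indicator_one hA).symm

theorem disjoint_supports_of_mutuallySingular_invariant_general
    {X : Type*} [TopologicalSpace X] [MeasurableSpace X]
    (P : Kernel X X) [IsMarkovKernel P] (hP : StrongFeller P)
    (μ ν : Measure X)
    (hμ : Invariant P μ) (hν : Invariant P ν) (hsing : μ ⟂ₘ ν) :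
    msupport μ ∩ msupport ν = ∅ := by
  obtain ⟨s, hs, hμs, hνs⟩ := hsing
  have hcont := hP.continuous_measureReal hs
  have hzero : ∀ x ∈ msupport μ, (P x).real s = 0 := fun x =>
    eq_of_mem_msupport_of_ae_eq hcont <| by
      filter_upwards [hμ.ae_kernel_apply_eq_zero hs hμs] with y hy
      simp [Measure.real, hy]
  have hone : ∀ x ∈ msupport ν, (P x).real s = 1 := fun x =>
    eq_of_mem_msupport_of_ae_eq hcont <| by
      filter_upwards [hν.ae_kernel_apply_eq_zero hs.compl hνs] with y hy
      simp [Measure.real, (prob_compl_eq_zero_iff hs).mp hy]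
  refine Set.eq_empty_of_forall_notMem fun x ⟨hxμ, hxν⟩ => ?_
  simpa [hzero x hxμ] using hone x hxν

/-- Let `P` be a strong Feller Markov kernel on a Polish space `X`. If `μ` and `ν` are two
invariant probability measures for `P` that are mutually singular, then their topological
supports are disjoint. -/
theorem disjoint_supports_of_mutuallySingular_invariant
    {X : Type*} [TopologicalSpace X] [PolishSpace X] [MeasurableSpace X] [BorelSpace X]
    (P : Kernel X X) [IsMarkovKernel P] (hP : StrongFeller P)
    (μ ν : Measure X) [IsProbabilityMeasure μ] [IsProbabilityMeasure ν]
    (hμ : Invariant P μ) (hν : Invariant P ν) (hsing : μ ⟂ₘ ν) :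
    msupport μ ∩ msupport ν = ∅ :=
  disjoint_supports_of_mutuallySingular_invariant_general P hP μ ν hμ hν hsing
end

section
/- Let (ξ_n)_{n ∈ ℤ} be any real sequence and set W_n = ξ_n + ξ_{n+1} for every n ∈ ℤ. Then for every integer N ≥ 1 one has the identity W_0 = (1/N) Σ_{n=1}^N (−1)^n (ξ_{n+1} + ξ_{−n}) − (1/N) Σ_{n=1}^N (−1)^n (N + 1 − n)(W_n + W_{−n}). -/
lemma C_formula (ξ : ℤ → ℝ) (W : ℤ → ℝ) (hW : ∀ n : ℤ, W n = ξ n + ξ (n + 1)) :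
    ∀ N : ℕ, ∑ n ∈ Finset.Icc 1 N, (-1 : ℝ) ^ n * (W (n : ℤ) + W (-(n : ℤ)))
      = -(W 0) - (-1 : ℝ) ^ (N + 1) * (ξ ((N : ℤ) + 1) + ξ (-(N : ℤ))) := by
  intro N
  induction N with
  | zero => simp [hW 0]; ring
  | succ N ih =>
      rw [Finset.sum_Icc_succ_top (by omega : 1 ≤ N + 1), ih]
      push_cast
      rw [hW ((N : ℤ) + 1), hW (-((N : ℤ) + 1)),
        show -((N : ℤ) + 1) + 1 = -(N : ℤ) by ring]
      ring

lemma main_formula (ξ : ℤ → ℝ) (W : ℤ → ℝ) (hW : ∀ n : ℤ, W n = ξ n + ξ (n + 1)) :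
    ∀ N : ℕ, (N : ℝ) * W 0
      = (∑ n ∈ Finset.Icc 1 N, (-1 : ℝ) ^ n * (ξ ((n : ℤ) + 1) + ξ (-(n : ℤ))))
        - ∑ n ∈ Finset.Icc 1 N,
            (-1 : ℝ) ^ n * ((N : ℝ) + 1 - (n : ℝ)) * (W (n : ℤ) + W (-(n : ℤ))) := by
  intro N
  induction N with
  | zero => simp
  | succ N ih =>
      have hsplit : ∑ n ∈ Finset.Icc 1 (N + 1),
          (-1 : ℝ) ^ n * ((↑(N + 1) : ℝ) + 1 - (n : ℝ)) * (W (n : ℤ) + W (-(n : ℤ)))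
          = (∑ n ∈ Finset.Icc 1 N,
              (-1 : ℝ) ^ n * ((N : ℝ) + 1 - (n : ℝ)) * (W (n : ℤ) + W (-(n : ℤ))))
            + ∑ n ∈ Finset.Icc 1 (N + 1), (-1 : ℝ) ^ n * (W (n : ℤ) + W (-(n : ℤ))) := by
        calc ∑ n ∈ Finset.Icc 1 (N + 1),
            (-1 : ℝ) ^ n * ((↑(N + 1) : ℝ) + 1 - (n : ℝ)) * (W (n : ℤ) + W (-(n : ℤ)))
            = ∑ n ∈ Finset.Icc 1 (N + 1),
              ((-1 : ℝ) ^ n * ((N : ℝ) + 1 - (n : ℝ)) * (W (n : ℤ) + W (-(n : ℤ)))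
                + (-1 : ℝ) ^ n * (W (n : ℤ) + W (-(n : ℤ)))) := by
              refine Finset.sum_congr rfl fun n _ => ?_
              push_cast; ring
          _ = (∑ n ∈ Finset.Icc 1 (N + 1),
                (-1 : ℝ) ^ n * ((N : ℝ) + 1 - (n : ℝ)) * (W (n : ℤ) + W (-(n : ℤ))))
              + ∑ n ∈ Finset.Icc 1 (N + 1), (-1 : ℝ) ^ n * (W (n : ℤ) + W (-(n : ℤ))) :=
              Finset.sum_add_distrib
          _ = _ := by
              rw [Finset.sum_Icc_succ_top (by omega : 1 ≤ N + 1)]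
              have h0 : (-1 : ℝ) ^ (N + 1) * ((N : ℝ) + 1 - (↑(N + 1) : ℝ))
                  * (W ((N + 1 : ℕ) : ℤ) + W (-((N + 1 : ℕ) : ℤ))) = 0 := by
                push_cast; ring
              rw [h0, add_zero]
      rw [hsplit, Finset.sum_Icc_succ_top (by omega : 1 ≤ N + 1),
        C_formula ξ W hW (N + 1)]
      push_cast
      push_cast at ih
      linear_combination ih

/-- Let `(ξ_n)_{n ∈ ℤ}` be any real sequence and set `W_n = ξ_n + ξ_{n+1}`. Then for every
integer `N ≥ 1`,
`W_0 = (1/N) ∑_{n=1}^N (−1)^n (ξ_{n+1} + ξ_{−n}) − (1/N) ∑_{n=1}^N (−1)^n (N+1−n)(W_n + W_{−n})`. -/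
theorem W_zero_identity (ξ : ℤ → ℝ) (W : ℤ → ℝ) (hW : ∀ n : ℤ, W n = ξ n + ξ (n + 1))
    (N : ℕ) (hN : 1 ≤ N) :
    W 0 = (1 / (N : ℝ)) * ∑ n ∈ Finset.Icc 1 N,
            (-1 : ℝ) ^ n * (ξ ((n : ℤ) + 1) + ξ (-(n : ℤ)))
        - (1 / (N : ℝ)) * ∑ n ∈ Finset.Icc 1 N,
            (-1 : ℝ) ^ n * ((N : ℝ) + 1 - (n : ℝ)) * (W (n : ℤ) + W (-(n : ℤ))) := by
  have h := main_formula ξ W hW N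
  have hN' : (N : ℝ) ≠ 0 := by positivity
  field_simp
  linarith [h]
end

section
/- Let (ξ_n)_{n ∈ ℤ} be a sequence of independent standard Gaussian random variables and set W_n = ξ_n + ξ_{n+1}. Then almost surely (1/N) Σ_{n=1}^N (−1)^n (ξ_{n+1} + ξ_{−n}) → 0 as N → ∞, and consequently one has the almost sure identity W_0 = − lim_{N→∞} (1/N) Σ_{n=1}^N (−1)^n (N + 1 − n)(W_n + W_{−n}). In particular, W_0 is almost surely determined by the values W_n for n ≠ 0. -/
open MeasureTheory ProbabilityTheory Filter Finset
open scoped NNReal Topology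

/-!
Write `g n = ξ (n + 1) + ξ (-n)` for `n ≥ 0`, so that `g 0 = W 0` and
`W n + W (-n) = g n + g (n - 1)` for `n ≥ 1`. The variables `(-1)^n g n`, `n ≥ 1`, involve pairwise
disjoint pairs of the `ξ`s, hence are independent, and each has law `N(0, 2)`; the strong law of
large numbers gives the first limit. Summation by parts turns the weighted sum of the
`W n + W (-n)` into `∑ (-1)^n g n - N g 0`, and dividing by `N` gives the second limit.
-/

section

variable {R : Type*} [CommRing R]

lemma sum_Icc_neg_one_pow_mul_add_pred (g : ℕ → R) (N : ℕ) :
    ∑ n ∈ Icc 1 N, (-1 : R) ^ n * (g n + g (n - 1)) = (-1) ^ N * g N - g 0 := by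
  induction N with
  | zero => simp
  | succ N ih =>
    rw [sum_Icc_succ_top (by omega), ih, Nat.add_sub_cancel, pow_succ]
    ring

lemma sum_Icc_neg_one_pow_mul_succ_sub_mul_add_pred (g : ℕ → R) (N : ℕ) :
    ∑ n ∈ Icc 1 N, (-1 : R) ^ n * ((N : R) + 1 - n) * (g n + g (n - 1))
      = ∑ n ∈ Icc 1 N, (-1 : R) ^ n * g n - N * g 0 := by
  induction N with
  | zero => simp
  | succ N ih =>
    have hweight : ∀ n ∈ Icc 1 (N + 1),
        (-1 : R) ^ n * (((N + 1 : ℕ) : R) + 1 - n) * (g n + g (n - 1))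
          = (-1 : R) ^ n * ((N : R) + 1 - n) * (g n + g (n - 1))
            + (-1 : R) ^ n * (g n + g (n - 1)) := by
      intro n _
      push_cast
      ring
    rw [sum_congr rfl hweight, sum_add_distrib, sum_Icc_succ_top (by omega)
      (fun n => (-1 : R) ^ n * ((N : R) + 1 - n) * (g n + g (n - 1))), ih,
      sum_Icc_neg_one_pow_mul_add_pred, sum_Icc_succ_top (by omega)]
    push_cast
    ring

end

lemma sum_Icc_one_eq_sum_range_succ {M : Type*} [AddCommMonoid M] (f : ℕ → M) (N : ℕ) :
    ∑ n ∈ Icc 1 N, f n = ∑ i ∈ range N, f (i + 1) := by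
  induction N with
  | zero => simp
  | succ N ih => rw [sum_Icc_succ_top (by omega), sum_range_succ, ih]

section

variable {Ω ι : Type*} [MeasurableSpace Ω] {P : Measure Ω} {ξ : ι → Ω → ℝ} {v : ℝ≥0}

lemma hasLaw_neg_one_pow_mul_add (hindep : iIndepFun ξ P)
    (hlaw : ∀ i, HasLaw (ξ i) (gaussianReal 0 v) P) (n : ℕ) {a b : ι} (hab : a ≠ b) :
    HasLaw (fun ω => (-1 : ℝ) ^ n * (ξ a ω + ξ b ω)) (gaussianReal 0 (2 * v)) P := by
  have hsum := (hindep.indepFun hab).hasLaw_add (hlaw a) (hlaw b)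
  rw [gaussianReal_conv_gaussianReal, add_zero, ← two_mul] at hsum
  have hsign : (.mk (((-1 : ℝ) ^ n) ^ 2) (sq_nonneg _) : ℝ≥0) = 1 :=
    NNReal.eq (by rw [NNReal.coe_mk, ← pow_mul, pow_mul', neg_one_sq, one_pow, NNReal.coe_one])
  simpa [hsign] using gaussianReal_const_mul hsum ((-1 : ℝ) ^ n)

lemma indepFun_mul_add_mul_add (hindep : iIndepFun ξ P) (hmeas : ∀ i, AEMeasurable (ξ i) P)
    (s t : ℝ) {a b c d : ι} (hac : a ≠ c) (had : a ≠ d) (hbc : b ≠ c) (hbd : b ≠ d) :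
    IndepFun (fun ω => s * (ξ a ω + ξ b ω)) (fun ω => t * (ξ c ω + ξ d ω)) P :=
  (hindep.indepFun_prodMk_prodMk₀ hmeas a b c d hac had hbc hbd).comp
    (φ := fun x : ℝ × ℝ => s * (x.1 + x.2)) (ψ := fun x : ℝ × ℝ => t * (x.1 + x.2))
    (by fun_prop) (by fun_prop)

end

section

variable {Ω : Type*} [MeasurableSpace Ω] {P : Measure Ω} {ξ : ℤ → Ω → ℝ} {v : ℝ≥0}

theorem ae_tendsto_avg_neg_one_pow_mul_add_reflected (hindep : iIndepFun ξ P)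
    (hlaw : ∀ i, HasLaw (ξ i) (gaussianReal 0 v) P) :
    ∀ᵐ ω ∂P, Tendsto (fun N : ℕ => (1 / (N : ℝ)) * ∑ n ∈ Icc 1 N,
      (-1 : ℝ) ^ n * (ξ ((n : ℤ) + 1) ω + ξ (-(n : ℤ)) ω)) atTop (𝓝 0) := by
  set X : ℕ → Ω → ℝ := fun i ω =>
    (-1 : ℝ) ^ (i + 1) * (ξ (((i + 1 : ℕ) : ℤ) + 1) ω + ξ (-((i + 1 : ℕ) : ℤ)) ω)
  have hXlaw (i : ℕ) : HasLaw (X i) (gaussianReal 0 (2 * v)) P :=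
    hasLaw_neg_one_pow_mul_add hindep hlaw _ (by omega)
  have hXindep : Pairwise (fun i j => IndepFun (X i) (X j) P) := fun i j hij =>
    indepFun_mul_add_mul_add hindep (fun k => (hlaw k).aemeasurable) _ _
      (by omega) (by omega) (by omega) (by omega)
  have hmean : P[X 0] = 0 := by
    rw [(hXlaw 0).integral_eq, integral_id_gaussianReal]
  have hslln := strong_law_ae_real X (hXlaw 0).hasGaussianLaw.integrable hXindep
    (fun i => (hXlaw i).identDistrib (hXlaw 0))
  filter_upwards [hslln] with ω hω
  rw [hmean] at hω
  simpa only [sum_Icc_one_eq_sum_range_succ, one_div, inv_mul_eq_div] using hω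

end

theorem gaussian_moving_average_determined_general
    {Ω : Type*} [MeasurableSpace Ω] (P : Measure Ω)
    (ξ : ℤ → Ω → ℝ)
    (hindep : iIndepFun ξ P)
    (hgauss : ∀ i, P.map (ξ i) = gaussianReal 0 1)
    (W : ℤ → Ω → ℝ) (hW : ∀ n ω, W n ω = ξ n ω + ξ (n + 1) ω) :
    ∀ᵐ ω ∂P,
      Tendsto (fun N : ℕ => (1 / (N : ℝ)) * ∑ n ∈ Finset.Icc 1 N,
          (-1 : ℝ) ^ n * (ξ ((n : ℤ) + 1) ω + ξ (-(n : ℤ)) ω)) atTop (nhds 0) ∧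
      Tendsto (fun N : ℕ => -((1 / (N : ℝ)) * ∑ n ∈ Finset.Icc 1 N,
          (-1 : ℝ) ^ n * ((N : ℝ) + 1 - (n : ℝ)) * (W (n : ℤ) ω + W (-(n : ℤ)) ω)))
        atTop (nhds (W 0 ω)) := by
  have hlaw (i : ℤ) : HasLaw (ξ i) (gaussianReal 0 1) P :=
    ⟨.of_map_ne_zero (by rw [hgauss i]; exact IsProbabilityMeasure.ne_zero _), hgauss i⟩
  filter_upwards [ae_tendsto_avg_neg_one_pow_mul_add_reflected hindep hlaw] with ω hω
  refine ⟨hω, ?_⟩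
  have hsum (N : ℕ) :
      ∑ n ∈ Icc 1 N, (-1 : ℝ) ^ n * ((N : ℝ) + 1 - n) * (W n ω + W (-(n : ℤ)) ω)
        = ∑ n ∈ Icc 1 N, (-1 : ℝ) ^ n * (ξ ((n : ℤ) + 1) ω + ξ (-(n : ℤ)) ω) - N * W 0 ω := by
    convert sum_Icc_neg_one_pow_mul_succ_sub_mul_add_pred
      (fun n => ξ ((n : ℤ) + 1) ω + ξ (-(n : ℤ)) ω) N using 3 with n hn
    · have hpred : ((n - 1 : ℕ) : ℤ) = n - 1 := by simp at hn; omega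
      simp only [hW, hpred]
      ring_nf
    · simp [hW, add_comm]
  have hlim := (tendsto_const_nhds (x := W 0 ω)).sub hω
  rw [sub_zero] at hlim
  refine hlim.congr' ((eventually_ne_atTop 0).mono fun N hN => ?_)
  dsimp only
  rw [hsum]
  field_simp
  ring

/-- Let `(ξ_n)_{n ∈ ℤ}` be i.i.d. standard Gaussian random variables and `W_n = ξ_n + ξ_{n+1}`.
Then almost surely `(1/N) ∑_{n=1}^N (−1)^n (ξ_{n+1} + ξ_{−n}) → 0` as `N → ∞` and,
consequently, almost surely
`W_0 = − lim_{N→∞} (1/N) ∑_{n=1}^N (−1)^n (N+1−n)(W_n + W_{−n})`;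
in particular `W_0` is almost surely determined by the `W_n`, `n ≠ 0`. -/
theorem gaussian_moving_average_determined
    {Ω : Type*} [MeasurableSpace Ω] (P : Measure Ω) [IsProbabilityMeasure P]
    (ξ : ℤ → Ω → ℝ) (hmeas : ∀ i, Measurable (ξ i))
    (hindep : iIndepFun ξ P)
    (hgauss : ∀ i, P.map (ξ i) = gaussianReal 0 1)
    (W : ℤ → Ω → ℝ) (hW : ∀ n ω, W n ω = ξ n ω + ξ (n + 1) ω) :
    ∀ᵐ ω ∂P,
      Tendsto (fun N : ℕ => (1 / (N : ℝ)) * ∑ n ∈ Finset.Icc 1 N,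
          (-1 : ℝ) ^ n * (ξ ((n : ℤ) + 1) ω + ξ (-(n : ℤ)) ω)) atTop (nhds 0) ∧
      Tendsto (fun N : ℕ => -((1 / (N : ℝ)) * ∑ n ∈ Finset.Icc 1 N,
          (-1 : ℝ) ^ n * ((N : ℝ) + 1 - (n : ℝ)) * (W (n : ℤ) ω + W (-(n : ℤ)) ω)))
        atTop (nhds (W 0 ω)) :=
  gaussian_moving_average_determined_general P ξ hindep hgauss W hW
end

section
/- Let X be a Polish space and let P and Q be two strong Feller Markov kernels on X. Then the composed Markov kernel PQ, defined by (PQ)(x,A) = ∫ Q(y,A) P(x,dy), is ultra Feller. -/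
/-!
Let `S` be a countable dense set and `η` a finite measure with the null sets of `∑_{d ∈ S} P d`.
If `(ηQ)(A) = 0`, the set `{y | Q(y, A) > 0}` is open (strong Feller property of `Q`) and
`η`-null, so it misses the support of `η`; hence `Q y ≪ ηQ` on the support. The complement of
the support is open and `P d`-null for `d ∈ S`, so by the strong Feller property of `P` and
density it is `P x`-null for every `x`. Thus `(PQ)(x)` has the density
`W x z = ∫ ρ(y, z) P(x, dy)` with respect to `ηQ`, where `ρ` is a jointly measurable density of
`Q`. For fixed `z`, `x ↦ W x z` is a supremum of continuous truncations, hence lower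
semicontinuous, and as all `W x` have integral one,
`‖(PQ)(x') − (PQ)(x)‖_TV ≤ 2 ∫ (W x − W x')⁺`, which tends to `0` by dominated convergence.
-/

open MeasureTheory ProbabilityTheory Filter
open scoped ENNReal

/-- The total variation distance between two finite measures: the total mass of the
variation `|μ − ν|`, computed as the supremum over measurable sets `A` of
`(μ(A) − ν(A)) + (ν(Aᶜ) − μ(Aᶜ))`. -/
noncomputable def tvDist {α : Type*} [MeasurableSpace α] (μ ν : Measure α) : ℝ≥0∞ :=
  ⨆ (A : Set α) (_ : MeasurableSet A), (μ A - ν A) + (ν Aᶜ - μ Aᶜ)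

/-- A kernel is *ultra Feller* if its transition probabilities are continuous in the
total variation distance. -/
def UltraFeller {X : Type*} [MeasurableSpace X] [TopologicalSpace X] (P : Kernel X X) : Prop :=
  ∀ x, Filter.Tendsto (fun y => tvDist (P y) (P x)) (nhds x) (nhds 0)

open Topology

lemma LowerSemicontinuousAt.tendsto_tsub_nhds_zero {α : Type*} [TopologicalSpace α]
    {f : α → ℝ≥0∞} {x : α} (hf : LowerSemicontinuousAt f x) (hx : f x ≠ ∞) :
    Tendsto (fun y => f x - f y) (𝓝 x) (𝓝 0) := by
  rw [ENNReal.tendsto_nhds_zero]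
  intro ε hε
  rcases eq_or_ne (f x) 0 with h0 | h0
  · simp [h0]
  filter_upwards [hf _ (ENNReal.sub_lt_self hx h0 hε.ne')] with y hy
  exact tsub_le_iff_tsub_le.mpr hy.le

section TotalVariation

variable {α : Type*} [MeasurableSpace α]

lemma tvDist_le_two_mul {μ ν : Measure α} [IsProbabilityMeasure μ] [IsProbabilityMeasure ν]
    {c : ℝ≥0∞} (h : ∀ s, MeasurableSet s → ν s - μ s ≤ c) : tvDist μ ν ≤ 2 * c := by
  refine iSup₂_le fun s hs => ?_
  have hsymm : μ s - ν s = ν sᶜ - μ sᶜ := by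
    rw [prob_compl_eq_one_sub hs, prob_compl_eq_one_sub hs,
      ENNReal.sub_sub_sub_cancel_left ENNReal.one_ne_top prob_le_one]
  rw [hsymm, two_mul]
  exact add_le_add (h _ hs.compl) (h _ hs.compl)

lemma withDensity_apply_sub_le (ζ : Measure α) {f g : α → ℝ≥0∞} (hf : Measurable f)
    {s : Set α} (hs : MeasurableSet s) :
    ζ.withDensity g s - ζ.withDensity f s ≤ ∫⁻ z, g z - f z ∂ζ := by
  rw [withDensity_apply _ hs, withDensity_apply _ hs]
  exact (lintegral_sub_le f g hf).trans (setLIntegral_le_lintegral s _)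

end TotalVariation

namespace StrongFeller

variable {X : Type*} [MeasurableSpace X] [TopologicalSpace X] {P : Kernel X X} [IsFiniteKernel P]

lemma continuous_lintegral (hP : StrongFeller P) {g : X → ℝ≥0∞} (hg : Measurable g)
    {C : ℝ≥0∞} (hC : C ≠ ∞) (hgC : ∀ y, g y ≤ C) :
    Continuous fun x => ∫⁻ y, g y ∂P x := by
  have hg_toReal : ∀ y, (g y).toReal ≤ C.toReal := fun y => ENNReal.toReal_mono hC (hgC y)
  have h_eq : (fun x => ∫⁻ y, g y ∂P x) = fun x => ENNReal.ofReal (∫ y, (g y).toReal ∂P x) := by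
    funext x
    have h_fin : ∫⁻ y, g y ∂P x ≠ ∞ :=
      ne_top_of_le_ne_top (by simpa using ENNReal.mul_ne_top hC (measure_ne_top (P x) .univ))
        (lintegral_mono hgC |>.trans_eq (lintegral_const C))
    rw [integral_toReal hg.aemeasurable (ae_of_all _ fun y => (hgC y).trans_lt hC.lt_top),
      ENNReal.ofReal_toReal h_fin]
  rw [h_eq]
  exact ENNReal.continuous_ofReal.comp <| hP _ hg.ennreal_toReal
    ⟨C.toReal, fun y => by simpa using hg_toReal y⟩

lemma continuous_measure_apply (hP : StrongFeller P) {s : Set X} (hs : MeasurableSet s) :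
    Continuous fun x => P x s := by
  simpa [lintegral_indicator_one hs] using
    hP.continuous_lintegral (g := s.indicator 1) (measurable_one.indicator hs) ENNReal.one_ne_top
      (Set.indicator_le_self' fun _ _ => zero_le_one)

lemma lowerSemicontinuous_lintegral (hP : StrongFeller P) {g : X → ℝ≥0∞} (hg : Measurable g) :
    LowerSemicontinuous fun x => ∫⁻ y, g y ∂P x := by
  have h_trunc : ∀ x, ∫⁻ y, g y ∂P x = ⨆ n : ℕ, ∫⁻ y, min (g y) n ∂P x := fun x => by
    rw [← lintegral_iSup (fun n => hg.min measurable_const)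
      fun m n hmn y => min_le_min_left _ (Nat.cast_le.mpr hmn)]
    simp only [← inf_iSup_eq, ENNReal.iSup_natCast, inf_top_eq]
  simp only [h_trunc]
  exact lowerSemicontinuous_iSup fun n => (hP.continuous_lintegral (hg.min measurable_const)
    (ENNReal.natCast_ne_top n) fun y => min_le_right _ _).lowerSemicontinuous

lemma absolutelyContinuous_comp (hP : StrongFeller P) {η : Measure X} {y : X}
    (hy : y ∈ η.support) : P y ≪ P ∘ₘ η := by
  refine Measure.AbsolutelyContinuous.mk fun s hs hs_null => ?_
  rw [Measure.bind_apply hs P.aemeasurable, lintegral_eq_zero_iff (P.measurable_coe hs)] at hs_null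
  have h_open : IsOpen {y' | 0 < P y' s} :=
    isOpen_lt continuous_const (hP.continuous_measure_apply hs)
  have h_null : η {y' | 0 < P y' s} = 0 :=
    measure_mono_null (fun y' (hy' : 0 < P y' s) => hy'.ne') (ae_iff.mp hs_null)
  by_contra h
  exact Measure.subset_compl_support_of_isOpen h_open h_null (pos_iff_ne_zero.mpr h) hy

lemma measure_compl_support_eq_zero [HereditarilyLindelofSpace X] [OpensMeasurableSpace X]
    (hP : StrongFeller P) {S : Set X} (hS : Dense S) {η : Measure X} (hSη : ∀ x ∈ S, P x ≪ η)
    (x : X) : P x η.supportᶜ = 0 :=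
  congrFun (hP.continuous_measure_apply Measure.isOpen_compl_support.measurableSet |>.ext_on hS
    continuous_const fun d hd => hSη d hd Measure.measure_compl_support) x

end StrongFeller

lemma MeasureTheory.Measure.comp_eq_withDensity {X Y : Type*} [MeasurableSpace X]
    [MeasurableSpace Y]
    {μ : Measure X} [SFinite μ] {ζ : Measure Y} [SFinite ζ] {κ : Kernel X Y}
    {ρ : X → Y → ℝ≥0∞} (hρ : Measurable (Function.uncurry ρ))
    (h : ∀ᵐ x ∂μ, κ x = ζ.withDensity (ρ x)) :
    κ ∘ₘ μ = ζ.withDensity fun z => ∫⁻ x, ρ x z ∂μ := by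
  ext s hs
  rw [Measure.bind_apply hs κ.aemeasurable, withDensity_apply _ hs,
    lintegral_congr_ae (h.mono fun x hx => by rw [hx, withDensity_apply _ hs])]
  exact lintegral_lintegral_swap hρ.aemeasurable

lemma StrongFeller.exists_comp_eq_withDensity {X : Type*} [TopologicalSpace X]
    [SecondCountableTopology X] [MeasurableSpace X] [BorelSpace X]
    {P Q : Kernel X X} [IsFiniteKernel P] [IsFiniteKernel Q]
    (hP : StrongFeller P) (hQ : StrongFeller Q) :
    ∃ (ζ : Measure X) (ρ : X → X → ℝ≥0∞), Measurable (Function.uncurry ρ) ∧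
      ∀ x, (Q ∘ₖ P) x = ζ.withDensity fun z => ∫⁻ y, ρ y z ∂P x := by
  obtain ⟨S, hS_count, hS_dense⟩ := TopologicalSpace.exists_countable_dense X
  have := hS_count.to_subtype
  -- `toFinite` keeps the null sets of the sum and makes `Q ∘ₘ η` finite, as `Kernel.rnDeriv` needs.
  set η := (Measure.sum fun d : S => P d).toFinite
  have hSη : ∀ d ∈ S, P d ≪ η := fun d hd =>
    (Measure.absolutelyContinuous_of_le (Measure.le_sum (fun d : S => P d) ⟨d, hd⟩)).trans
      (absolutelyContinuous_toFinite _)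
  set ζ := Q ∘ₘ η
  refine ⟨ζ, Q.rnDeriv (Kernel.const X ζ), Kernel.measurable_rnDeriv _ _, fun x => ?_⟩
  rw [Kernel.comp_apply]
  refine Measure.comp_eq_withDensity (Kernel.measurable_rnDeriv _ _) ?_
  have h_support : ∀ᵐ y ∂P x, y ∈ η.support := by
    simpa using measure_eq_zero_iff_ae_notMem.mp (hP.measure_compl_support_eq_zero hS_dense hSη x)
  filter_upwards [h_support] with y hy
  have h_ac : Q y ≪ Kernel.const X ζ y := hQ.absolutelyContinuous_comp hy
  rw [← Kernel.withDensity_rnDeriv_eq h_ac,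
    Kernel.withDensity_apply _ (Kernel.measurable_rnDeriv _ _), Kernel.const_apply]

lemma ultraFeller_of_eq_withDensity {X : Type*} [MeasurableSpace X] [TopologicalSpace X]
    [FirstCountableTopology X] {κ : Kernel X X} [IsMarkovKernel κ] {ζ : Measure X}
    {W : X → X → ℝ≥0∞} (hW : ∀ x, Measurable (W x))
    (hW_lsc : ∀ z, LowerSemicontinuous fun x => W x z) (hκ : ∀ x, κ x = ζ.withDensity (W x)) :
    UltraFeller κ := by
  intro x
  have h_bound : ∀ x', tvDist (κ x') (κ x) ≤ 2 * ∫⁻ z, W x z - W x' z ∂ζ := fun x' =>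
    tvDist_le_two_mul fun s hs => by
      rw [hκ x, hκ x']
      exact withDensity_apply_sub_le ζ (hW x') hs
  have h_fin : ∫⁻ z, W x z ∂ζ ≠ ∞ := by
    simpa [hκ x] using measure_ne_top (κ x) Set.univ
  have h_lim : Tendsto (fun x' => ∫⁻ z, W x z - W x' z ∂ζ) (𝓝 x) (𝓝 0) := by
    simpa using tendsto_lintegral_filter_of_dominated_convergence (f := fun _ => 0) (W x)
      (Eventually.of_forall fun x' => (hW x).sub (hW x'))
      (Eventually.of_forall fun x' => ae_of_all _ fun z => tsub_le_self) h_fin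
      (by filter_upwards [ae_lt_top (hW x) h_fin] with z hz
          exact LowerSemicontinuousAt.tendsto_tsub_nhds_zero (hW_lsc z x) hz.ne)
  refine tendsto_of_tendsto_of_tendsto_of_le_of_le tendsto_const_nhds ?_ (fun _ => zero_le)
    h_bound
  simpa using ENNReal.Tendsto.const_mul h_lim (Or.inr ENNReal.ofNat_ne_top)

/-- Let `X` be a Polish space and let `P` and `Q` be two strong Feller Markov kernels on `X`.
Then the composed kernel `PQ`, `(PQ)(x,A) = ∫ Q(y,A) P(x,dy)`, is ultra Feller. -/
theorem comp_strongFeller_ultraFeller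
    {X : Type*} [TopologicalSpace X] [PolishSpace X] [MeasurableSpace X] [BorelSpace X]
    (P Q : Kernel X X) [IsMarkovKernel P] [IsMarkovKernel Q]
    (hP : StrongFeller P) (hQ : StrongFeller Q) :
    UltraFeller (Q ∘ₖ P) := by
  obtain ⟨ζ, ρ, hρ, hPQ⟩ := hP.exists_comp_eq_withDensity hQ
  exact ultraFeller_of_eq_withDensity (fun x => hρ.lintegral_prod_left')
    (fun z => hP.lowerSemicontinuous_lintegral (hρ.comp measurable_prodMk_right)) hPQ
end

section
/- Let X = [0,1] and define the Markov kernel P by P(0,dy) = dy (Lebesgue measure on [0,1]) and, for x ∈ (0,1], P(x,dy) = c(x)(1 + sin(y/x)) dy, where c(x) = (1 + x(1 − cos(1/x)))^{−1} is the normalising constant making P(x,·) a probability measure. Then P is strong Feller, but lim_{x → 0+} ‖P(x,·) − P(0,·)‖_TV = 2/π; in particular, P is not ultra Feller. -/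
open MeasureTheory Filter
open scoped ENNReal Topology

/-- The kernel on `X = [0,1]`: `P(0,dy) = dy` and, for `x ≠ 0`,
`P(x,dy) = c(x) (1 + sin(y/x)) dy` on `[0,1]`, with `c(x) = (1 + x(1 − cos(1/x)))⁻¹`. -/
noncomputable def exampleKernel (x : ℝ) : Measure ℝ :=
  if x = 0 then volume.restrict (Set.Icc 0 1)
  else (volume.restrict (Set.Icc 0 1)).withDensity fun y =>
    ENNReal.ofReal ((1 + x * (1 - Real.cos (1 / x)))⁻¹ * (1 + Real.sin (y / x)))

open scoped FourierTransform

/-!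
Strong Feller: for `x > 0` the density `c(x) (1 + sin (y / x))` of `P(x, ·)` is bounded by `2` and
continuous in `x`, so dominated convergence applies. At `x = 0` one has
`∫ f dP(x, ·) = c(x) (∫₀¹ f + ∫₀¹ f(y) sin (y / x) dy)`, where `c(x) → 1` and the oscillatory
integral tends to `0` by the Riemann–Lebesgue lemma.

Total variation: the supremum defining `tvDist` is attained at the set where the density is `≥ 1`,
so `‖P(x, ·) − P(0, ·)‖ = ∫₀¹ |c(x) (1 + sin (y / x)) − 1| dy`. This differs from
`c(x) ∫₀¹ |sin (y / x)| dy = c(x) x ∫₀^{1/x} |sin|` by at most `|c(x) − 1|`, and the average of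
`|sin|` over long intervals tends to its mean `2 / π` over a period.
-/

section TotalVariation

variable {α : Type*} [MeasurableSpace α] {ν : Measure α} {f : α → ℝ} {s : Set α}

theorem withDensity_ofReal_apply_eq_ofReal_setIntegral (hf : Integrable f ν) (hf₀ : 0 ≤ᵐ[ν] f)
    (hs : MeasurableSet s) :
    ν.withDensity (fun y => ENNReal.ofReal (f y)) s = ENNReal.ofReal (∫ y in s, f y ∂ν) := by
  rw [withDensity_apply _ hs,
    ofReal_integral_eq_lintegral_ofReal hf.integrableOn (ae_restrict_of_ae hf₀)]

variable [IsFiniteMeasure ν]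

theorem withDensity_ofReal_apply_sub_apply (hf : Integrable f ν) (hf₀ : 0 ≤ᵐ[ν] f)
    (hs : MeasurableSet s) :
    ν.withDensity (fun y => ENNReal.ofReal (f y)) s - ν s =
      ENNReal.ofReal (∫ y in s, (f y - 1) ∂ν) := by
  rw [withDensity_ofReal_apply_eq_ofReal_setIntegral hf hf₀ hs, ← ofReal_measureReal,
    ← ENNReal.ofReal_sub _ measureReal_nonneg, integral_sub hf.integrableOn (integrable_const 1),
    setIntegral_const, smul_eq_mul, mul_one]

theorem apply_sub_withDensity_ofReal_apply (hf : Integrable f ν) (hf₀ : 0 ≤ᵐ[ν] f)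
    (hs : MeasurableSet s) :
    ν s - ν.withDensity (fun y => ENNReal.ofReal (f y)) s =
      ENNReal.ofReal (∫ y in s, (1 - f y) ∂ν) := by
  rw [withDensity_ofReal_apply_eq_ofReal_setIntegral hf hf₀ hs, ← ofReal_measureReal,
    ← ENNReal.ofReal_sub _ (integral_nonneg_of_ae (ae_restrict_of_ae hf₀)),
    integral_sub (integrable_const 1) hf.integrableOn, setIntegral_const, smul_eq_mul, mul_one]

theorem tvDist_withDensity_ofReal_self (hf_meas : Measurable f) (hf : Integrable f ν)
    (hf₀ : 0 ≤ᵐ[ν] f) :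
    tvDist (ν.withDensity fun y => ENNReal.ofReal (f y)) ν =
      ENNReal.ofReal (∫ y, |f y - 1| ∂ν) := by
  have h_int : Integrable (fun y => |f y - 1|) ν := (hf.sub (integrable_const 1)).abs
  have h_split : ∀ A, MeasurableSet A → ENNReal.ofReal (∫ y, |f y - 1| ∂ν) =
      ENNReal.ofReal (∫ y in A, |f y - 1| ∂ν) + ENNReal.ofReal (∫ y in Aᶜ, |f y - 1| ∂ν) :=
    fun A hA => by
      rw [← ENNReal.ofReal_add (integral_nonneg fun _ => abs_nonneg _)
        (integral_nonneg fun _ => abs_nonneg _), integral_add_compl hA h_int]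
  unfold tvDist
  apply le_antisymm
  · refine iSup₂_le fun A hA => ?_
    rw [withDensity_ofReal_apply_sub_apply hf hf₀ hA,
      apply_sub_withDensity_ofReal_apply hf hf₀ hA.compl, h_split A hA]
    gcongr ENNReal.ofReal ?_ + ENNReal.ofReal ?_
    · exact setIntegral_mono (hf.sub (integrable_const 1)).integrableOn h_int.integrableOn
        fun y => le_abs_self (f y - 1)
    · exact setIntegral_mono ((integrable_const 1).sub hf).integrableOn h_int.integrableOn
        fun y => abs_sub_comm (f y) 1 ▸ le_abs_self (1 - f y)
  · have hA : MeasurableSet {y | 1 ≤ f y} := measurableSet_le measurable_const hf_meas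
    refine le_iSup₂_of_le _ hA (le_of_eq ?_)
    rw [withDensity_ofReal_apply_sub_apply hf hf₀ hA,
      apply_sub_withDensity_ofReal_apply hf hf₀ hA.compl, h_split _ hA,
      setIntegral_congr_fun hA fun y (hy : 1 ≤ f y) => abs_of_nonneg (sub_nonneg.2 hy),
      setIntegral_congr_fun hA.compl fun y (hy : ¬1 ≤ f y) => abs_of_neg (sub_neg.2 (not_le.1 hy))]
    simp only [neg_sub]

end TotalVariation

theorem Function.Periodic.tendsto_intervalIntegral_div_atTop {g : ℝ → ℝ} {T : ℝ}
    (hg : Function.Periodic g T) (hT : 0 < T) (h_int : IntervalIntegrable g volume 0 T) :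
    Tendsto (fun t => (∫ x in 0..t, g x) / t) atTop (𝓝 ((∫ x in 0..T, g x) / T)) := by
  set I := ∫ x in 0..T, g x
  have h_floor : Tendsto (fun t : ℝ => (⌊t / T⌋ : ℝ) / t) atTop (𝓝 T⁻¹) := by
    refine (tendsto_nat_floor_mul_div_atTop (inv_nonneg.2 hT.le)).congr' ?_
    filter_upwards [eventually_ge_atTop 0] with t ht
    rw [inv_mul_eq_div, natCast_floor_eq_intCast_floor (div_nonneg ht hT.le)]
  have h_rem : Tendsto (fun t => ((∫ x in 0..t, g x) - ⌊t / T⌋ • I) / t) atTop (𝓝 0) :=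
    tendsto_bdd_div_atTop_nhds_zero
      (Eventually.of_forall fun t =>
        le_sub_iff_add_le.2 (hg.sInf_add_zsmul_le_integral_of_pos h_int hT t))
      (Eventually.of_forall fun t =>
        sub_le_iff_le_add.2 (hg.integral_le_sSup_add_zsmul_of_pos h_int hT t))
      tendsto_id
  convert h_rem.add (h_floor.mul_const I) using 2 with t
  · rw [zsmul_eq_mul]; ring
  · rw [zero_add, inv_mul_eq_div]

theorem tendsto_integral_abs_sin_div_atTop :
    Tendsto (fun t => (∫ u in 0..t, |Real.sin u|) / t) atTop (𝓝 (2 / Real.pi)) := by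
  have h_pi : ∫ u in 0..Real.pi, |Real.sin u| = 2 := by
    rw [intervalIntegral.integral_congr (g := Real.sin) fun u hu => abs_of_nonneg ?_, integral_sin,
      Real.cos_pi, Real.cos_zero]
    · norm_num
    · rw [Set.uIcc_of_le Real.pi_pos.le] at hu
      exact Real.sin_nonneg_of_nonneg_of_le_pi hu.1 hu.2
  have h_per : Function.Periodic (fun u => |Real.sin u|) Real.pi := fun u => by
    simp [Real.sin_add_pi]
  simpa only [h_pi] using h_per.tendsto_intervalIntegral_div_atTop Real.pi_pos
    (Real.continuous_sin.abs.intervalIntegrable _ _)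

theorem tendsto_setIntegral_abs_sin_div_nhdsGT_zero :
    Tendsto (fun x => ∫ y in Set.Icc 0 1, |Real.sin (y / x)|) (𝓝[>] 0)
      (𝓝 (2 / Real.pi)) := by
  refine (tendsto_integral_abs_sin_div_atTop.comp tendsto_inv_nhdsGT_zero).congr'
    (eventually_mem_nhdsWithin.mono fun x (hx : 0 < x) => ?_)
  beta_reduce
  rw [Function.comp_apply, integral_Icc_eq_integral_Ioc,
    ← intervalIntegral.integral_of_le zero_le_one,
    intervalIntegral.integral_comp_div (fun u => |Real.sin u|) hx.ne', zero_div, one_div,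
    div_inv_eq_mul, smul_eq_mul, mul_comm]

theorem tendsto_integral_mul_sin_mul_atTop {F : ℝ → ℝ} (hF : Integrable F) :
    Tendsto (fun w => ∫ v, F v * Real.sin (v * w)) atTop (𝓝 0) := by
  -- `𝐞 t = exp (2πit)`, so this is the Riemann–Lebesgue lemma read off the imaginary part.
  have h_fourier : ∀ w, ∫ v, F v * Real.sin (v * (2 * Real.pi * w)) =
      -RCLike.im (∫ v, 𝐞 (-(v * w)) • (F v : ℂ)) := fun w => by
    rw [← integral_im, ← integral_neg]
    · congr 1 with v
      rw [Circle.smul_def, Real.fourierChar_apply]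
      simp only [smul_eq_mul, RCLike.im_to_complex, Complex.mul_im, Complex.exp_ofReal_mul_I_im,
        Complex.exp_ofReal_mul_I_re, Complex.ofReal_im, Complex.ofReal_re, mul_neg, Real.sin_neg]
      ring_nf
    · simpa [mul_comm] using (Real.fourierIntegral_convergent_iff w).2 (hF.ofReal (𝕜 := ℂ))
  have h_RL : Tendsto (fun w => -RCLike.im (∫ v, 𝐞 (-(v * w)) • (F v : ℂ))) atTop (𝓝 0) := by
    simpa using ((RCLike.continuous_im.tendsto (0 : ℂ)).comp
      ((Real.tendsto_integral_exp_smul_cocompact fun v => (F v : ℂ)).mono_left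
        atTop_le_cocompact)).neg
  refine ((h_RL.congr fun w => (h_fourier w).symm).comp
    (tendsto_id.atTop_div_const (by positivity : 0 < 2 * Real.pi))).congr fun w => ?_
  simp only [Function.comp_apply, id]
  rw [mul_div_cancel₀ _ (by positivity)]

theorem tendsto_setIntegral_mul_sin_div_nhdsGT_zero {F : ℝ → ℝ} {s : Set ℝ} (hs : MeasurableSet s)
    (hF : IntegrableOn F s) :
    Tendsto (fun x => ∫ y in s, F y * Real.sin (y / x)) (𝓝[>] 0) (𝓝 0) := by
  refine ((tendsto_integral_mul_sin_mul_atTop ((integrable_indicator_iff hs).2 hF)).comp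
    tendsto_inv_nhdsGT_zero).congr fun x => ?_
  rw [Function.comp_apply, ← integral_indicator hs]
  congr 1 with y
  by_cases hy : y ∈ s <;> simp [hy, div_eq_mul_inv]

noncomputable def exampleNormConst (x : ℝ) : ℝ := (1 + x * (1 - Real.cos (1 / x)))⁻¹

noncomputable def exampleDensity (x y : ℝ) : ℝ := exampleNormConst x * (1 + Real.sin (y / x))

theorem exampleKernel_zero : exampleKernel 0 = volume.restrict (Set.Icc 0 1) := if_pos rfl

theorem exampleKernel_of_ne_zero {x : ℝ} (hx : x ≠ 0) :
    exampleKernel x = (volume.restrict (Set.Icc 0 1)).withDensity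
      fun y => ENNReal.ofReal (exampleDensity x y) := if_neg hx

theorem one_le_one_add_mul_one_sub_cos {x : ℝ} (hx : 0 ≤ x) :
    1 ≤ 1 + x * (1 - Real.cos (1 / x)) :=
  le_add_of_nonneg_right (mul_nonneg hx (sub_nonneg.2 (Real.cos_le_one _)))

theorem exampleNormConst_pos {x : ℝ} (hx : 0 ≤ x) : 0 < exampleNormConst x :=
  inv_pos.2 (one_pos.trans_le (one_le_one_add_mul_one_sub_cos hx))

theorem exampleNormConst_le_one {x : ℝ} (hx : 0 ≤ x) : exampleNormConst x ≤ 1 :=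
  inv_le_one_of_one_le₀ (one_le_one_add_mul_one_sub_cos hx)

theorem exampleDensity_nonneg {x : ℝ} (hx : 0 ≤ x) (y : ℝ) : 0 ≤ exampleDensity x y :=
  mul_nonneg (exampleNormConst_pos hx).le (by linarith [Real.neg_one_le_sin (y / x)])

theorem exampleDensity_le_two {x : ℝ} (hx : 0 ≤ x) (y : ℝ) : exampleDensity x y ≤ 2 :=
  calc exampleDensity x y ≤ 1 * 2 :=
        mul_le_mul (exampleNormConst_le_one hx) (by linarith [Real.sin_le_one (y / x)])
          (by linarith [Real.neg_one_le_sin (y / x)]) zero_le_one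
    _ = 2 := one_mul 2

@[fun_prop]
theorem continuous_exampleDensity (x : ℝ) : Continuous (exampleDensity x) := by
  unfold exampleDensity; fun_prop

theorem continuousAt_exampleNormConst {x : ℝ} (hx : 0 < x) : ContinuousAt exampleNormConst x := by
  have h_denom := one_pos.trans_le (one_le_one_add_mul_one_sub_cos hx.le)
  unfold exampleNormConst
  fun_prop (disch := positivity)

theorem tendsto_exampleNormConst_zero : Tendsto exampleNormConst (𝓝 0) (𝓝 1) := by
  have h_small : Tendsto (fun x : ℝ => x * (1 - Real.cos (1 / x))) (𝓝 0) (𝓝 0) :=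
    bdd_le_mul_tendsto_zero' 2 (Eventually.of_forall fun x => by
      rw [abs_le]; constructor <;> linarith [Real.cos_le_one (1 / x), Real.neg_one_le_cos (1 / x)])
      tendsto_id |>.congr fun x => mul_comm _ _
  have := (tendsto_const_nhds.add h_small).inv₀ (by norm_num : (1 : ℝ) + 0 ≠ 0)
  rwa [add_zero, inv_one] at this

theorem integral_one_add_sin_div {x : ℝ} (hx : x ≠ 0) :
    ∫ y in (0 : ℝ)..1, (1 + Real.sin (y / x)) = 1 + x * (1 - Real.cos (1 / x)) := by
  rw [intervalIntegral.integral_add intervalIntegrable_const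
      (by apply Continuous.intervalIntegrable; fun_prop),
    intervalIntegral.integral_comp_div Real.sin hx, integral_sin]
  simp

theorem setIntegral_exampleDensity {x : ℝ} (hx : 0 < x) :
    ∫ y in Set.Icc 0 1, exampleDensity x y = 1 := by
  rw [integral_Icc_eq_integral_Ioc, ← intervalIntegral.integral_of_le zero_le_one]
  unfold exampleDensity
  rw [intervalIntegral.integral_const_mul, integral_one_add_sin_div hx.ne', exampleNormConst,
    inv_mul_cancel₀ (one_pos.trans_le (one_le_one_add_mul_one_sub_cos hx.le)).ne']

theorem isProbabilityMeasure_exampleKernel {x : ℝ} (hx : 0 ≤ x) :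
    IsProbabilityMeasure (exampleKernel x) := by
  rcases hx.eq_or_lt with rfl | hx
  · rw [exampleKernel_zero]
    exact ⟨by simp [Real.volume_Icc]⟩
  · rw [exampleKernel_of_ne_zero hx.ne']
    refine ⟨?_⟩
    rw [withDensity_apply _ MeasurableSet.univ, Measure.restrict_univ,
      ← ofReal_integral_eq_lintegral_ofReal (continuous_exampleDensity x).integrableOn_Icc
        (Eventually.of_forall (exampleDensity_nonneg hx.le)),
      setIntegral_exampleDensity hx, ENNReal.ofReal_one]

theorem integral_exampleKernel {x : ℝ} (hx : 0 < x) (f : ℝ → ℝ) :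
    ∫ y, f y ∂(exampleKernel x) = ∫ y in Set.Icc 0 1, exampleDensity x y * f y := by
  rw [exampleKernel_of_ne_zero hx.ne', integral_withDensity_eq_integral_toReal_smul
    (continuous_exampleDensity x).measurable.ennreal_ofReal
    (Eventually.of_forall fun _ => ENNReal.ofReal_lt_top)]
  simp only [ENNReal.toReal_ofReal (exampleDensity_nonneg hx.le _), smul_eq_mul]

theorem continuousAt_integral_exampleKernel {f : ℝ → ℝ} (hf : Measurable f) {C : ℝ}
    (hC : ∀ y, |f y| ≤ C) {x₀ : ℝ} (hx₀ : 0 < x₀) :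
    ContinuousAt (fun x => ∫ y, f y ∂(exampleKernel x)) x₀ := by
  have h_pos : ∀ᶠ x in 𝓝 x₀, 0 < x := eventually_gt_nhds hx₀
  refine ContinuousAt.congr ?_ (h_pos.mono fun x hx => (integral_exampleKernel hx f).symm)
  refine continuousAt_of_dominated (bound := fun _ => 2 * C)
    (Eventually.of_forall fun x =>
      ((continuous_exampleDensity x).measurable.mul hf).aestronglyMeasurable)
    (h_pos.mono fun x hx => Eventually.of_forall fun y => ?_) (integrable_const _)
    (Eventually.of_forall fun y => ?_)
  · rw [Real.norm_eq_abs, abs_mul, abs_of_nonneg (exampleDensity_nonneg hx.le y)]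
    exact mul_le_mul (exampleDensity_le_two hx.le y) (hC y) (abs_nonneg _) zero_le_two
  · have := continuousAt_exampleNormConst hx₀
    unfold exampleDensity
    fun_prop (disch := exact hx₀.ne')

theorem tendsto_integral_exampleKernel_nhdsGT_zero {f : ℝ → ℝ} (hf : Measurable f) {C : ℝ}
    (hC : ∀ y, |f y| ≤ C) :
    Tendsto (fun x => ∫ y, f y ∂(exampleKernel x)) (𝓝[>] 0)
      (𝓝 (∫ y, f y ∂(exampleKernel 0))) := by
  have h_int : IntegrableOn f (Set.Icc 0 1) :=
    Integrable.of_bound hf.aestronglyMeasurable C (Eventually.of_forall hC)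
  have h_sin_int (x : ℝ) : IntegrableOn (fun y => f y * Real.sin (y / x)) (Set.Icc 0 1) :=
    h_int.mul_of_top_left (memLp_top_of_bound (by fun_prop) 1
      (Eventually.of_forall fun y => Real.abs_sin_le_one _))
  have h_lim := (tendsto_exampleNormConst_zero.mono_left nhdsWithin_le_nhds).mul
    ((tendsto_const_nhds (x := ∫ y in Set.Icc 0 1, f y)).add
      (tendsto_setIntegral_mul_sin_div_nhdsGT_zero measurableSet_Icc h_int))
  rw [one_mul, add_zero] at h_lim
  rw [exampleKernel_zero]
  refine h_lim.congr' (eventually_mem_nhdsWithin.mono fun x (hx : 0 < x) => ?_)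
  beta_reduce
  rw [integral_exampleKernel hx, ← integral_add h_int (h_sin_int x), ← integral_const_mul]
  congr 1 with y
  unfold exampleDensity
  ring

theorem continuousOn_integral_exampleKernel {f : ℝ → ℝ} (hf : Measurable f) {C : ℝ}
    (hC : ∀ y, |f y| ≤ C) :
    ContinuousOn (fun x => ∫ y, f y ∂(exampleKernel x)) (Set.Icc 0 1) := by
  intro x hx
  rcases hx.1.eq_or_lt with rfl | hx₀
  · refine (continuousWithinAt_insert_self.2
      (tendsto_integral_exampleKernel_nhdsGT_zero hf hC)).mono fun y hy => ?_
    rcases hy.1.eq_or_lt with rfl | hy₀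
    exacts [Set.mem_insert _ _, Or.inr hy₀]
  · exact (continuousAt_integral_exampleKernel hf hC hx₀).continuousWithinAt

theorem abs_abs_exampleDensity_sub_one_sub_le {x : ℝ} (hx : 0 ≤ x) (y : ℝ) :
    abs (|exampleDensity x y - 1| - exampleNormConst x * |Real.sin (y / x)|) ≤
      |exampleNormConst x - 1| := by
  rw [← abs_of_pos (exampleNormConst_pos hx), ← abs_mul, abs_of_pos (exampleNormConst_pos hx)]
  refine (abs_abs_sub_abs_le _ _).trans_eq ?_
  unfold exampleDensity
  ring_nf

theorem tendsto_setIntegral_abs_exampleDensity_sub_one :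
    Tendsto (fun x => ∫ y in Set.Icc 0 1, |exampleDensity x y - 1|) (𝓝[>] 0)
      (𝓝 (2 / Real.pi)) := by
  have h_const : Tendsto exampleNormConst (𝓝[>] 0) (𝓝 1) :=
    tendsto_exampleNormConst_zero.mono_left nhdsWithin_le_nhds
  have h_err : Tendsto (fun x => (∫ y in Set.Icc 0 1, |exampleDensity x y - 1|) -
      exampleNormConst x * ∫ y in Set.Icc 0 1, |Real.sin (y / x)|) (𝓝[>] 0) (𝓝 0) := by
    have h_lim : Tendsto (fun x => |exampleNormConst x - 1|) (𝓝[>] 0) (𝓝 0) := by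
      simpa using (h_const.sub_const 1).abs
    refine squeeze_zero_norm' (eventually_mem_nhdsWithin.mono fun x (hx : 0 < x) => ?_) h_lim
    rw [← integral_const_mul, ← integral_sub]
    · refine (norm_setIntegral_le_of_norm_le_const measure_Icc_lt_top
        fun y _ => abs_abs_exampleDensity_sub_one_sub_le hx.le y).trans_eq ?_
      simp [Real.volume_real_Icc]
    all_goals exact Continuous.integrableOn_Icc (by fun_prop)
  simpa using h_err.add (h_const.mul tendsto_setIntegral_abs_sin_div_nhdsGT_zero)

theorem tvDist_exampleKernel {x : ℝ} (hx : 0 < x) :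
    tvDist (exampleKernel x) (exampleKernel 0) =
      ENNReal.ofReal (∫ y in Set.Icc 0 1, |exampleDensity x y - 1|) := by
  rw [exampleKernel_of_ne_zero hx.ne', exampleKernel_zero]
  exact tvDist_withDensity_ofReal_self (continuous_exampleDensity x).measurable
    (continuous_exampleDensity x).integrableOn_Icc
    (Eventually.of_forall (exampleDensity_nonneg hx.le))

theorem tendsto_tvDist_exampleKernel :
    Tendsto (fun x => tvDist (exampleKernel x) (exampleKernel 0)) (𝓝[>] 0)
      (𝓝 (ENNReal.ofReal (2 / Real.pi))) :=
  ((ENNReal.continuous_ofReal.tendsto _).comp tendsto_setIntegral_abs_exampleDensity_sub_one).congr'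
    (eventually_mem_nhdsWithin.mono fun _ hx => (tvDist_exampleKernel hx).symm)

/-- The kernel `P(x,dy) = c(x)(1 + sin(y/x)) dy` on `[0,1]` (with `P(0,·)` the Lebesgue
measure) is a Markov kernel which is strong Feller, but
`lim_{x→0+} ‖P(x,·) − P(0,·)‖_TV = 2/π`; in particular it is not ultra Feller. -/
theorem exampleKernel_strongFeller_not_ultraFeller :
    (∀ x ∈ Set.Icc (0 : ℝ) 1, IsProbabilityMeasure (exampleKernel x)) ∧
    (∀ f : ℝ → ℝ, Measurable f → (∃ C, ∀ y, |f y| ≤ C) →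
      ContinuousOn (fun x => ∫ y, f y ∂(exampleKernel x)) (Set.Icc 0 1)) ∧
    Tendsto (fun x => tvDist (exampleKernel x) (exampleKernel 0)) (𝓝[>] 0)
      (𝓝 (ENNReal.ofReal (2 / Real.pi))) ∧
    ¬ Tendsto (fun x => tvDist (exampleKernel x) (exampleKernel 0)) (𝓝[>] 0) (𝓝 0) := by
  refine ⟨fun x hx => isProbabilityMeasure_exampleKernel hx.1,
    fun f hf ⟨C, hC⟩ => continuousOn_integral_exampleKernel hf hC, tendsto_tvDist_exampleKernel,
    fun h => ?_⟩
  have h_zero := tendsto_nhds_unique tendsto_tvDist_exampleKernel h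
  rw [ENNReal.ofReal_eq_zero] at h_zero
  exact h_zero.not_gt (by positivity)
end
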